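/- arXiv:1303.4878 — 5 statements merged into one kernel-verified Lean document; each statement's English description precedes it below -/
import Mathlib

section
/- Let $a \geq 1$ be an integer. The amalgamated sum (pushout) of monoids $P = \mathbb{N}^2 \oplus_{\mathbb{N}} \mathbb{N}$, formed from the diagonal map $\Delta: \mathbb{N} \to \mathbb{N}^2$, $n \mapsto (n,n)$, and the multiplication-by-$a$ map $\mathbb{N} \to \mathbb{N}$, is isomorphic to the submonoid $\frac{1}{a}\Delta(\mathbb{N}) + \mathbb{N}^2$ of $\mathbb{Q}^2$ consisting of pairs of the form $(\frac{n}{a} + \alpha, \frac{n}{a} + \beta)$ with $n, \alpha, \beta \in \mathbb{N}$. -/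
/-!
The map `ℕ × ℕ² → Pmon a`, `(n, x) ↦ hP a n + ιP a x`, is a surjective monoid homomorphism, so a
morphism out of `Pmon a` is the same as a morphism `g ⊕ f` out of `ℕ × ℕ²` that is constant on its
fibres. Two triples `(n, α, β)`, `(n', α', β')` have the same image iff `n + aα = n' + aα'` and
`n + aβ = n' + aβ'`; for `n' ≤ n` this forces `n = n' + ak`, `α' = α + k`, `β' = β + k`, and then
`f (k, k) = g (a k)` makes `g ⊕ f` take the same value on both.
-/

/-- The submonoid `(1/a)Δ(ℕ) + ℕ²` of `ℚ²`, consisting of the pairs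
`(n/a + α, n/a + β)` with `n, α, β ∈ ℕ`. -/
def Pmon (a : ℕ) : AddSubmonoid (ℚ × ℚ) where
  carrier := {x | ∃ n α β : ℕ, x = ((n : ℚ) / a + α, (n : ℚ) / a + β)}
  zero_mem' := ⟨0, 0, 0, by ext <;> simp⟩
  add_mem' := by
    rintro x y ⟨n, α, β, rfl⟩ ⟨n', α', β', rfl⟩
    refine ⟨n + n', α + α', β + β', ?_⟩
    simp only [Prod.mk_add_mk, Prod.mk.injEq]
    constructor <;> · push_cast; ring

/-- The map `ℕ² → (1/a)Δ(ℕ) + ℕ²`, `(α, β) ↦ (α, β)`. -/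
def ιP (a : ℕ) (x : ℕ × ℕ) : Pmon a :=
  ⟨((x.1 : ℚ), (x.2 : ℚ)), ⟨0, x.1, x.2, by norm_num⟩⟩

/-- The map `h : ℕ → (1/a)Δ(ℕ) + ℕ²`, `n ↦ (n/a, n/a)`. -/
def hP (a : ℕ) (n : ℕ) : Pmon a :=
  ⟨((n : ℚ) / a, (n : ℚ) / a), ⟨n, 0, 0, by norm_num⟩⟩

open Function

theorem AddMonoidHom.existsUnique_comp_eq_of_surjective {A B M : Type*} [AddZeroClass A]
    [AddZeroClass B] [AddZeroClass M] {π : A →+ B} (hπ : Surjective π) (F : A →+ M)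
    (hF : ∀ x y, π x = π y → F x = F y) : ∃! φ : B →+ M, φ.comp π = F := by
  have hsec (x : A) : F (surjInv hπ (π x)) = F x := hF _ _ (surjInv_eq hπ _)
  refine ⟨⟨⟨F ∘ surjInv hπ, ?_⟩, fun b c => ?_⟩, ?_, fun ψ hψ => ?_⟩
  · simpa using hsec 0
  · refine (hF _ _ ?_).trans (map_add F _ _)
    simp only [map_add, surjInv_eq]
  · ext x
    exact hsec x
  · exact (AddMonoidHom.cancel_right hπ).1 (hψ.trans (AddMonoidHom.ext hsec).symm)

theorem Nat.exists_eq_add_of_add_mul_eq_add_mul {a n n' α β α' β' : ℕ} (ha : 0 < a)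
    (hn : n' ≤ n) (hα : n + a * α = n' + a * α') (hβ : n + a * β = n' + a * β') :
    ∃ k, n = n' + a * k ∧ α' = α + k ∧ β' = β + k := by
  have hαα' : α ≤ α' := Nat.le_of_mul_le_mul_left (by omega) ha
  obtain ⟨k, rfl⟩ := Nat.exists_eq_add_of_le hαα'
  rw [Nat.mul_add] at hα
  refine ⟨k, by omega, rfl, Nat.eq_of_mul_eq_mul_left ha ?_⟩
  rw [Nat.mul_add]
  omega

def hPHom (a : ℕ) : ℕ →+ Pmon a where
  toFun := hP a
  map_zero' := by ext <;> simp [hP]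
  map_add' m n := by ext <;> simp [hP, add_div]

def ιPHom (a : ℕ) : ℕ × ℕ →+ Pmon a where
  toFun := ιP a
  map_zero' := by ext <;> simp [ιP]
  map_add' x y := by ext <;> simp [ιP]

def Pmon.param (a : ℕ) : ℕ × (ℕ × ℕ) →+ Pmon a := (hPHom a).coprod (ιPHom a)

section Pmon

variable {a : ℕ}

@[simp]
theorem hP_zero : hP a 0 = 0 := (hPHom a).map_zero

@[simp]
theorem ιP_zero : ιP a 0 = 0 := (ιPHom a).map_zero

theorem Pmon.param_apply (p : ℕ × (ℕ × ℕ)) : Pmon.param a p = hP a p.1 + ιP a p.2 := rfl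

theorem Pmon.param_surjective : Surjective (Pmon.param a) := by
  rintro ⟨x, n, α, β, rfl⟩
  exact ⟨(n, α, β), by ext <;> simp [Pmon.param_apply, hP, ιP]⟩

theorem Pmon.param_eq_iff (ha : a ≠ 0) {n α β n' α' β' : ℕ} :
    Pmon.param a (n, α, β) = Pmon.param a (n', α', β') ↔
      n + a * α = n' + a * α' ∧ n + a * β = n' + a * β' := by
  have ha' : (a : ℚ) ≠ 0 := by exact_mod_cast ha
  have key (n α n' α' : ℕ) :
      (n : ℚ) / a + α = n' / a + α' ↔ n + a * α = n' + a * α' := by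
    rw [← @Nat.cast_inj ℚ]
    push_cast
    constructor <;> intro h
    · field_simp at h; linarith
    · field_simp; linarith
  simp only [Pmon.param_apply, Subtype.ext_iff, Prod.ext_iff, AddSubmonoid.coe_add,
    Prod.fst_add, Prod.snd_add, hP, ιP, key]

theorem Pmon.coprod_eq_of_param_eq (ha : a ≠ 0) {M : Type*} [AddCommMonoid M]
    (f : ℕ × ℕ →+ M) (g : ℕ →+ M) (hfg : ∀ n : ℕ, f (n, n) = g (a * n))
    {p q : ℕ × (ℕ × ℕ)} (h : Pmon.param a p = Pmon.param a q) :
    g.coprod f p = g.coprod f q := by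
  wlog hle : q.1 ≤ p.1 generalizing p q
  · exact (this h.symm (by omega)).symm
  obtain ⟨n, α, β⟩ := p
  obtain ⟨n', α', β'⟩ := q
  obtain ⟨hα, hβ⟩ := (Pmon.param_eq_iff ha).1 h
  obtain ⟨k, rfl, rfl, rfl⟩ :=
    Nat.exists_eq_add_of_add_mul_eq_add_mul (Nat.pos_of_ne_zero ha) hle hα hβ
  calc g (n' + a * k) + f (α, β) = g n' + (f (α, β) + f (k, k)) := by
        rw [map_add, ← hfg, add_comm (f _), add_assoc]
    _ = g n' + f (α + k, β + k) := by rw [← map_add, Prod.mk_add_mk]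

end Pmon

/-- **The amalgamated sum description.**  For `a ≥ 1`, the monoid
`P = (1/a)Δ(ℕ) + ℕ² ⊆ ℚ²`, together with the maps `ℕ² → P` and `h : ℕ → P`,
satisfies the universal property of the pushout `ℕ² ⊕_ℕ ℕ` of the diagonal
`Δ : ℕ → ℕ²` and multiplication by `a` on `ℕ`, in the category of commutative
(additive) monoids; hence the pushout is isomorphic to `P`. -/
theorem stmt0 (a : ℕ) (ha : 1 ≤ a)
    (M : Type*) [AddCommMonoid M] (f : ℕ × ℕ →+ M) (g : ℕ →+ M)
    (hfg : ∀ n : ℕ, f (n, n) = g (a * n)) :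
    ∃! φ : Pmon a →+ M, (∀ x : ℕ × ℕ, φ (ιP a x) = f x) ∧ ∀ n : ℕ, φ (hP a n) = g n := by
  obtain ⟨φ, hφ, huniq⟩ := AddMonoidHom.existsUnique_comp_eq_of_surjective
    Pmon.param_surjective (g.coprod f) fun _ _ =>
      Pmon.coprod_eq_of_param_eq (by omega) f g hfg
  have hφ' (n : ℕ) (x : ℕ × ℕ) : φ (hP a n + ιP a x) = g n + f x :=
    DFunLike.congr_fun hφ (n, x)
  refine ⟨φ, ⟨fun x => ?_, fun n => ?_⟩, fun ψ ⟨hψι, hψh⟩ => huniq ψ ?_⟩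
  · simpa using hφ' 0 x
  · simpa using hφ' n 0
  · ext ⟨n, x⟩
    simp [Pmon.param_apply, hψι, hψh]
end

section
/- Let $a \geq 1$ be an integer and let $P = \frac{1}{a}\Delta(\mathbb{N}) + \mathbb{N}^2 \subseteq \mathbb{Q}^2$ be the submonoid of pairs $(\frac{n}{a}+\alpha, \frac{n}{a}+\beta)$ with $n,\alpha,\beta \in \mathbb{N}$. Then the map $h: \mathbb{N} \to P$ given by $n \mapsto (\frac{n}{a}, \frac{n}{a})$ is injective and the quotient group $P^{\mathrm{gp}}/h(\mathbb{N})^{\mathrm{gp}}$ is torsion-free. -/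
/-- The map `h : ℕ → (1/a)Δ(ℕ) + ℕ² ⊆ ℚ²`, `n ↦ (n/a, n/a)`. -/
def hmap (a : ℕ) (n : ℕ) : ℚ × ℚ := ((n : ℚ) / a, (n : ℚ) / a)

theorem hmap_injective {a : ℕ} (ha : a ≠ 0) : Function.Injective (hmap a) := by
  intro n n' h
  have hq : (n : ℚ) / a = n' / a := congrArg Prod.fst h
  exact_mod_cast (div_left_inj' (Nat.cast_ne_zero.mpr ha)).mp hq

def pmonLattice (a : ℕ) : AddSubgroup (ℚ × ℚ) :=
  (AddSubgroup.zmultiples 1).comap ((a : ℚ) • AddMonoidHom.fst ℚ ℚ) ⊓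
    (AddSubgroup.zmultiples 1).comap (AddMonoidHom.fst ℚ ℚ - AddMonoidHom.snd ℚ ℚ)

theorem mem_pmonLattice {a : ℕ} {x : ℚ × ℚ} :
    x ∈ pmonLattice a ↔ (∃ k : ℤ, (k : ℚ) = a * x.1) ∧ ∃ l : ℤ, (l : ℚ) = x.1 - x.2 := by
  simp [pmonLattice, AddSubgroup.mem_zmultiples_iff]

theorem closure_pmon_le_pmonLattice (a : ℕ) :
    AddSubgroup.closure (Pmon a : Set (ℚ × ℚ)) ≤ pmonLattice a := by
  rw [AddSubgroup.closure_le]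
  rintro _ ⟨n, α, β, rfl⟩
  refine mem_pmonLattice.mpr ⟨?_, ⟨α - β, by push_cast; ring⟩⟩
  obtain rfl | ha := eq_or_ne a 0
  · exact ⟨0, by simp⟩
  · exact ⟨n + a * α, by push_cast; field_simp⟩

theorem fst_eq_snd_of_nsmul_mem_zmultiples {M : Type*} [AddCommGroup M] [IsAddTorsionFree M]
    {x : M × M} {c : M} {m : ℕ} (hm : m ≠ 0) (h : m • x ∈ AddSubgroup.zmultiples (c, c)) :
    x.1 = x.2 := by
  obtain ⟨j, hj⟩ := AddSubgroup.mem_zmultiples_iff.mp h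
  apply nsmul_right_injective hm
  change (m • x).1 = (m • x).2
  simp [← hj]

theorem mem_zmultiples_of_mem_pmonLattice {a : ℕ} (ha : a ≠ 0) {x : ℚ × ℚ}
    (hx : x ∈ pmonLattice a) (hdiag : x.1 = x.2) :
    x ∈ AddSubgroup.zmultiples ((1 / (a : ℚ), 1 / (a : ℚ)) : ℚ × ℚ) := by
  obtain ⟨⟨k, hk⟩, -⟩ := mem_pmonLattice.mp hx
  have hx1 : x.1 = k / a := by
    rw [hk]
    field_simp
  refine AddSubgroup.mem_zmultiples_iff.mpr ⟨k, Prod.ext ?_ ?_⟩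
  · simp [hx1, div_eq_mul_inv]
  · simp [← hdiag, hx1, div_eq_mul_inv]

/-- For `a ≥ 1`, the map `h : ℕ → P = (1/a)Δ(ℕ) + ℕ²`, `n ↦ (n/a, n/a)` is injective,
and the quotient `P^gp / h(ℕ)^gp` is torsion-free: here `P^gp` is the subgroup of `ℚ²`
generated by `P` (its Grothendieck group) and `h(ℕ)^gp = ℤ·(1/a, 1/a)`; torsion-freeness
of the quotient says that any element of `P^gp` with a positive multiple in `h(ℕ)^gp`
already lies in `h(ℕ)^gp`. -/
theorem stmt1 (a : ℕ) (ha : 1 ≤ a) :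
    Function.Injective (hmap a) ∧
    ∀ x : ℚ × ℚ, x ∈ AddSubgroup.closure (Pmon a : Set (ℚ × ℚ)) →
      ∀ m : ℕ, 0 < m →
        m • x ∈ AddSubgroup.zmultiples ((1 / (a : ℚ), 1 / (a : ℚ)) : ℚ × ℚ) →
        x ∈ AddSubgroup.zmultiples ((1 / (a : ℚ), 1 / (a : ℚ)) : ℚ × ℚ) := by
  have ha' : a ≠ 0 := Nat.one_le_iff_ne_zero.mp ha
  refine ⟨hmap_injective ha', fun x hx m hm hmx => ?_⟩
  exact mem_zmultiples_of_mem_pmonLattice ha' (closure_pmon_le_pmonLattice a hx)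
    (fst_eq_snd_of_nsmul_mem_zmultiples hm.ne' hmx)
end

section
/- Let $A \to B$ be a finite étale ring homomorphism of commutative rings (finite projective and separable as an $A$-algebra), and let $g: B \to A$ be an $A$-algebra section of it. Then there exists an idempotent $e \in B$ and an $A$-algebra $C$ together with an isomorphism of $A$-algebras $B \cong A \times C$ under which $g$ corresponds to the first projection. Moreover $e$ is the unique element with $g(x) = \mathrm{Tr}_{B/A}(ex)$ for all $x \in B$. -/
/-!
Perfectness of the trace pairing gives a unique `e` with `Tr(e x) = g x`. Since `g` is
multiplicative, `Tr(e x y) = g x g y = Tr(g x • e y)`, so `e x = g x • e`: multiplication by `e`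
is the rank-one map `x ↦ g x • e`, whose trace is `g e`. Comparing with `Tr e = g 1 = 1` gives
`g e = 1`, so `e` is idempotent, and `x ↦ (g x, x mod e)` is an isomorphism `B ≅ A × B/(e)`.
-/

universe u

/-- The data of a splitting `B ≅ A × C` of an `A`-algebra `B`, under which a given
`A`-algebra section `g : B → A` corresponds to the first projection. -/
structure SplittingData (A B : Type u) [CommRing A] [CommRing B] [Algebra A B]
    (g : B →ₐ[A] A) where
  C : Type u
  [commRingC : CommRing C]
  [algebraC : Algebra A C]
  iso : B ≃ₐ[A] A × C
  fst_eq : ∀ x : B, (iso x).1 = g x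

namespace Algebra

variable {A B : Type*} [CommRing A] [CommRing B] [Algebra A B]

/-- Mathlib's trace vanishes on modules without a finite basis, so a nondegenerate trace form
forces freeness. -/
theorem free_of_traceForm_injective (hinj : Function.Injective (traceForm A B)) :
    Module.Free A B := by
  by_cases hbasis : ∃ s : Finset B, Nonempty (Module.Basis s A B)
  · obtain ⟨s, ⟨b⟩⟩ := hbasis
    exact .of_basis b
  · have htrace : trace A B = 0 := trace_eq_zero_of_not_exists_basis A hbasis
    have : Subsingleton B := ⟨fun x y => hinj <| LinearMap.ext fun z => by
      simp [traceForm_apply, htrace]⟩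
    infer_instance

theorem eq_of_trace_mul_eq (hinj : Function.Injective (traceForm A B)) {e e' : B}
    (h : ∀ x, trace A B (e * x) = trace A B (e' * x)) : e = e' :=
  hinj <| LinearMap.ext h

variable (g : B →ₐ[A] A) {e : B}

theorem mul_eq_smul_of_trace_mul_eq (hinj : Function.Injective (traceForm A B))
    (he : ∀ x, trace A B (e * x) = g x) (x : B) : e * x = g x • e :=
  eq_of_trace_mul_eq hinj fun y => by
    rw [mul_assoc, he, smul_mul_assoc, map_smul, he, map_mul, smul_eq_mul]

theorem apply_eq_one_of_trace_mul_eq [Module.Free A B] [Module.Finite A B]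
    (he : ∀ x, trace A B (e * x) = g x) (hmul : ∀ x, e * x = g x • e) : g e = 1 := by
  have hlmul : lmul A B e = g.toLinearMap.smulRight e :=
    LinearMap.ext fun x => by simp [hmul]
  calc g e = LinearMap.trace A B (g.toLinearMap.smulRight e) := by simp
    _ = trace A B (e * 1) := by rw [← hlmul, mul_one]; rfl
    _ = 1 := by rw [he, map_one]

theorem isIdempotentElem_of_mul_eq_smul (hmul : ∀ x, e * x = g x • e) (hge : g e = 1) :
    IsIdempotentElem e := by
  rw [IsIdempotentElem, hmul, hge, one_smul]

end Algebra

variable {A B : Type u} [CommRing A] [CommRing B] [Algebra A B] {g : B →ₐ[A] A} {e : B}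

/-- The inverse sends `(a, x mod e)` to `a • e + (1 - e) x`. -/
noncomputable def SplittingData.ofMulEqSmul (hmul : ∀ x, e * x = g x • e) (hge : g e = 1) :
    SplittingData A B g where
  C := B ⧸ Ideal.span {e}
  iso := AlgEquiv.ofBijective (g.prod (Ideal.Quotient.mkₐ A _)) <| by
    have hidem := Algebra.isIdempotentElem_of_mul_eq_smul g hmul hge
    refine ⟨(injective_iff_map_eq_zero _).2 fun x hx => ?_, ?_⟩
    · obtain ⟨z, rfl⟩ := Ideal.mem_span_singleton'.1 <|
        Ideal.Quotient.eq_zero_iff_mem.1 (congrArg Prod.snd hx)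
      have hgx : g (z * e) = 0 := congrArg Prod.fst hx
      calc z * e = z * (e * e) := by rw [hidem]
        _ = e * (z * e) := by ring
        _ = 0 := by rw [hmul, hgx, zero_smul]
    · rintro ⟨a, c⟩
      obtain ⟨b, rfl⟩ := Ideal.Quotient.mk_surjective c
      refine ⟨a • e + b - e * b, Prod.ext ?_ ?_⟩
      · simp [hge]
      · refine Ideal.Quotient.eq.2 <| Ideal.mem_span_singleton'.2 ⟨algebraMap A B a - b, ?_⟩
        rw [Algebra.smul_def]
        ring
  fst_eq _ := rfl

theorem stmt3_general (A B : Type u) [CommRing A] [CommRing B] [Algebra A B]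
    [Module.Finite A B]
    (hperfect : Function.Bijective ⇑(Algebra.traceForm A B))
    (g : B →ₐ[A] A) :
    ∃ e : B, IsIdempotentElem e ∧
      (∀ x : B, g x = Algebra.trace A B (e * x)) ∧
      (∀ e' : B, (∀ x : B, g x = Algebra.trace A B (e' * x)) → e' = e) ∧
      Nonempty (SplittingData A B g) := by
  have : Module.Free A B := Algebra.free_of_traceForm_injective hperfect.injective
  obtain ⟨e, he⟩ := hperfect.surjective g.toLinearMap
  have htrace (x : B) : Algebra.trace A B (e * x) = g x := LinearMap.congr_fun he x
  have hmul := Algebra.mul_eq_smul_of_trace_mul_eq g hperfect.injective htrace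
  have hge := Algebra.apply_eq_one_of_trace_mul_eq g htrace hmul
  refine ⟨e, Algebra.isIdempotentElem_of_mul_eq_smul g hmul hge, fun x => (htrace x).symm,
    fun e' he' => Algebra.eq_of_trace_mul_eq hperfect.injective fun x => ?_,
    ⟨.ofMulEqSmul hmul hge⟩⟩
  rw [← he', htrace]

/-- **Splitting off a section of a finite étale map.**  Let `A → B` be finite étale
(finite projective with perfect trace pairing) and let `g : B → A` be an `A`-algebra
section.  Then there is an idempotent `e ∈ B` and an `A`-algebra `C` with an
`A`-algebra isomorphism `B ≅ A × C` under which `g` is the first projection; moreover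
`e` is the unique element with `g x = Tr_{B/A}(e x)` for all `x ∈ B`. -/
theorem stmt3 (A B : Type u) [CommRing A] [CommRing B] [Algebra A B]
    [Module.Finite A B] [Module.Projective A B]
    (hperfect : Function.Bijective ⇑(Algebra.traceForm A B))
    (g : B →ₐ[A] A) :
    ∃ e : B, IsIdempotentElem e ∧
      (∀ x : B, g x = Algebra.trace A B (e * x)) ∧
      (∀ e' : B, (∀ x : B, g x = Algebra.trace A B (e' * x)) → e' = e) ∧
      Nonempty (SplittingData A B g) :=
  stmt3_general A B hperfect g
end

section
/- Let $\Lambda$ be a complete local Noetherian ring with maximal ideal $\mathfrak{m}$ and residue field $\mathbb{F}$, and let $D \cong \prod_{i \in \mathbb{N}} \Lambda$ as a $\Lambda$-module. Let $(e_i)_{i \in I}$ be a family of elements of $D$ whose images in $D/\mathfrak{m}D$ form an $\mathbb{F}$-basis. Then for every $n \in \mathbb{N}$, the natural map $\bigoplus_{i \in I} (\Lambda/\mathfrak{m}^n) e_i \to D/\mathfrak{m}^n D$ is an isomorphism of $\Lambda$-modules. -/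
/-!
Reading coordinates through `D ≅ ℕ → Λ`, the images of the `eᵢ` become a family of vectors in
`ℕ → 𝔽` that is linearly independent over `𝔽`. Linear independence over a field survives base
change to any vector space, in particular to `𝔪ⁿ/𝔪ⁿ⁺¹`: if `∑ fᵢ eᵢ ∈ 𝔪ⁿ⁺¹D` with all
`fᵢ ∈ 𝔪ⁿ`, the classes of the `fᵢ` in `𝔪ⁿ/𝔪ⁿ⁺¹` vanish. Induction on `n` gives injectivity;
surjectivity lifts from `D/𝔪D` to `D/𝔪ⁿD` by successive approximation.
-/

open IsLocalRing Submodule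

theorem Ideal.FG.smul_top_pi_eq {R : Type*} [CommRing R] {J : Ideal R} (hJ : J.FG)
    (ι : Type*) : J • (⊤ : Submodule R (ι → R)) = Submodule.pi Set.univ fun _ => J := by
  refine le_antisymm (smul_le.mpr fun r hr x _ j _ => J.mul_mem_right (x j) hr) fun x hx => ?_
  obtain ⟨s, rfl⟩ := hJ
  choose c _ hc using fun j => mem_span_finset.mp (hx j trivial)
  have : x = ∑ a ∈ s, a • fun j => c j a := by
    ext j
    simp [← hc j, mul_comm]
  rw [this]
  exact Submodule.sum_mem _ fun a ha => smul_mem_smul (subset_span ha) mem_top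

theorem LinearEquiv.mem_smul_top_iff_forall_apply_mem {R : Type*} [CommRing R] {J : Ideal R}
    (hJ : J.FG) {ι D : Type*} [AddCommGroup D] [Module R D] (ϕ : D ≃ₗ[R] (ι → R)) (d : D) :
    d ∈ J • (⊤ : Submodule R D) ↔ ∀ j, ϕ d j ∈ J := by
  have : (J • ⊤ : Submodule R D) = (J • ⊤ : Submodule R (ι → R)).comap ϕ.toLinearMap := by
    rw [comap_equiv_eq_map_symm, map_smul'', Submodule.map_top, LinearEquiv.range]
  rw [this, mem_comap, hJ.smul_top_pi_eq]
  simp [Submodule.mem_pi]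

theorem Submodule.surjective_mkQ_pow_smul_top_comp {R M N : Type*} [CommRing R]
    [AddCommGroup M] [Module R M] [AddCommGroup N] [Module R N] {I : Ideal R} {f : M →ₗ[R] N}
    (h : Function.Surjective (mkQ (I • ⊤) ∘ₗ f)) (n : ℕ) :
    Function.Surjective (mkQ (I ^ n • ⊤ : Submodule R N) ∘ₗ f) := by
  induction n with
  | zero =>
    rintro ⟨y⟩
    exact ⟨0, (Quotient.eq _).mpr (by simp)⟩
  | succ n ih =>
    intro y
    obtain ⟨y, rfl⟩ := mkQ_surjective _ y
    obtain ⟨x, hx⟩ := ih (mkQ _ y)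
    obtain ⟨x', -, hx'⟩ :=
      AdicCompletion.exists_smodEq_pow_smul_top_and_smodEq_pow_add_one_smul_top h (x := x) hx
    exact ⟨x', hx'⟩

theorem LinearIndependent.eq_zero_of_forall_sum_smul_eq_zero {K W ι I : Type*} [Field K]
    [AddCommGroup W] [Module K W] {v : I → ι → K} (hv : LinearIndependent K v) {s : Finset I}
    {w : I → W} (hw : ∀ j, ∑ i ∈ s, v i j • w i = 0) : ∀ i ∈ s, w i = 0 := by
  intro i hi
  rw [← Module.forall_dual_apply_eq_zero_iff K]
  intro μ
  refine linearIndependent_iff'.mp hv s (fun i => μ (w i)) ?_ i hi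
  ext j
  simpa [Finset.sum_apply, mul_comm] using congrArg μ (hw j)

section

variable {R : Type*} [CommRing R] {𝔪 : Ideal R} {ι I : Type*} {a : I → ι → R}

theorem linearIndependent_quotient_of_linearCombination_mem
    (ha : ∀ c : I →₀ R, (∀ j, Finsupp.linearCombination R a c j ∈ 𝔪) → ∀ i, c i ∈ 𝔪) :
    LinearIndependent (R ⧸ 𝔪) fun i j => Ideal.Quotient.mk 𝔪 (a i j) := by
  rw [linearIndependent_iff]
  intro l hl
  obtain ⟨c, rfl⟩ := Finsupp.mapRange_surjective _ (map_zero _) Ideal.Quotient.mk_surjective l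
  have hc : ∀ j, Finsupp.linearCombination R a c j ∈ 𝔪 := by
    intro j
    have := congrFun hl j
    rw [Finsupp.linearCombination_apply, Finsupp.sum_mapRange_index (by simp)] at this
    rw [← Ideal.Quotient.eq_zero_iff_mem]
    simpa [Finsupp.linearCombination_apply, Finsupp.sum, Finset.sum_apply] using this
  ext i
  simpa [Ideal.Quotient.eq_zero_iff_mem] using ha c hc i

theorem mem_pow_succ_of_linearCombination_mem [𝔪.IsMaximal]
    (ha : LinearIndependent (R ⧸ 𝔪) fun i j => Ideal.Quotient.mk 𝔪 (a i j)) {n : ℕ}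
    {f : I →₀ R} (hf : ∀ i, f i ∈ 𝔪 ^ n)
    (hfa : ∀ j, Finsupp.linearCombination R a f j ∈ 𝔪 ^ (n + 1)) (i : I) :
    f i ∈ 𝔪 ^ (n + 1) := by
  let := Ideal.Quotient.field 𝔪
  let w : I → (𝔪 ^ n : Ideal R) ⧸ (𝔪 • ⊤ : Submodule R (𝔪 ^ n : Ideal R)) :=
    fun i => Submodule.Quotient.mk ⟨f i, hf i⟩
  have hw : ∀ i ∈ f.support, w i = 0 := by
    refine ha.eq_zero_of_forall_sum_smul_eq_zero fun j => ?_
    have hsum : ∑ i ∈ f.support, Ideal.Quotient.mk 𝔪 (a i j) • w i =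
        mkQ _ (∑ i ∈ f.support, a i j • (⟨f i, hf i⟩ : (𝔪 ^ n : Ideal R))) := by
      simp only [w, Module.Quotient.mk_smul_mk, map_sum]
      rfl
    rw [hsum, mkQ_apply, Quotient.mk_eq_zero, mem_smul_top_iff, Ideal.smul_eq_mul, ← pow_succ']
    simpa [Finsupp.linearCombination_apply, Finsupp.sum, Finset.sum_apply, mul_comm] using hfa j
  by_cases hi : i ∈ f.support
  · simpa [w, Quotient.mk_eq_zero, mem_smul_top_iff, ← pow_succ'] using hw i hi
  · simp [Finsupp.notMem_support_iff.mp hi]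

theorem forall_linearCombination_apply_mem_pow_iff [𝔪.IsMaximal]
    (ha : LinearIndependent (R ⧸ 𝔪) fun i j => Ideal.Quotient.mk 𝔪 (a i j)) (n : ℕ)
    (f : I →₀ R) : (∀ j, Finsupp.linearCombination R a f j ∈ 𝔪 ^ n) ↔ ∀ i, f i ∈ 𝔪 ^ n := by
  refine ⟨fun h => ?_, fun hf j => ?_⟩
  · induction n with
    | zero => simp
    | succ n ih =>
      exact mem_pow_succ_of_linearCombination_mem ha
        (ih fun j => Ideal.pow_le_pow_right n.le_succ (h j)) h
  · simp only [Finsupp.linearCombination_apply, Finsupp.sum, Finset.sum_apply, Pi.smul_apply,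
      smul_eq_mul]
    exact Ideal.sum_mem _ fun i _ => Ideal.mul_mem_right _ _ (hf i)

end

theorem stmt6_general (Λ : Type*) [CommRing Λ] [IsLocalRing Λ] [IsNoetherianRing Λ]
    (D : Type*) [AddCommGroup D] [Module Λ D]
    (hD : Nonempty (D ≃ₗ[Λ] (ℕ → Λ)))
    (I : Type*) (e : I → D)
    (hsurj₁ : Function.Surjective
      ((Submodule.mkQ ((maximalIdeal Λ) • (⊤ : Submodule Λ D))).comp
        (Finsupp.linearCombination Λ e)))
    (hker₁ : ∀ f : I →₀ Λ,
      (Submodule.mkQ ((maximalIdeal Λ) • (⊤ : Submodule Λ D)))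
          (Finsupp.linearCombination Λ e f) = 0 ↔ ∀ i, f i ∈ maximalIdeal Λ) :
    ∀ n : ℕ,
      Function.Surjective
        ((Submodule.mkQ (((maximalIdeal Λ) ^ n) • (⊤ : Submodule Λ D))).comp
          (Finsupp.linearCombination Λ e)) ∧
      ∀ f : I →₀ Λ,
        (Submodule.mkQ (((maximalIdeal Λ) ^ n) • (⊤ : Submodule Λ D)))
            (Finsupp.linearCombination Λ e f) = 0 ↔ ∀ i, f i ∈ (maximalIdeal Λ) ^ n := by
  obtain ⟨ϕ⟩ := hD
  have hcoord (n : ℕ) (f : I →₀ Λ) :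
      mkQ ((maximalIdeal Λ) ^ n • ⊤ : Submodule Λ D) (Finsupp.linearCombination Λ e f) = 0 ↔
        ∀ j, Finsupp.linearCombination Λ (fun i => ϕ (e i)) f j ∈ (maximalIdeal Λ) ^ n := by
    rw [mkQ_apply, Quotient.mk_eq_zero,
      ϕ.mem_smul_top_iff_forall_apply_mem (IsNoetherian.noetherian _), ← LinearEquiv.coe_coe,
      Finsupp.apply_linearCombination]
    rfl
  have hindep : LinearIndependent (ResidueField Λ) fun i j => residue Λ (ϕ (e i) j) :=
    linearIndependent_quotient_of_linearCombination_mem fun c hc => by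
      have := (hcoord 1 c).mpr (by simpa only [pow_one] using hc)
      rwa [pow_one, hker₁] at this
  intro n
  exact ⟨surjective_mkQ_pow_smul_top_comp hsurj₁ n,
    fun f => (hcoord n f).trans (forall_linearCombination_apply_mem_pow_iff hindep n f)⟩

/-- Let `Λ` be a complete local Noetherian ring with maximal ideal `𝔪` and residue
field `𝔽`, and let `D ≅ ∏_{i ∈ ℕ} Λ` as a `Λ`-module.  Let `(e i)` be a family of
elements of `D` whose images in `D/𝔪D` form an `𝔽`-basis (expressed: the map
`⊕ᵢ Λ eᵢ → D/𝔪D` is surjective with kernel exactly the tuples of coefficients in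
`𝔪`).  Then for every `n` the natural map `⊕ᵢ (Λ/𝔪ⁿ) eᵢ → D/𝔪ⁿD` is an isomorphism,
i.e. the map `(I →₀ Λ) → D/𝔪ⁿD` is surjective with kernel exactly the tuples of
coefficients in `𝔪ⁿ`. -/
theorem stmt6 (Λ : Type*) [CommRing Λ] [IsLocalRing Λ] [IsNoetherianRing Λ]
    [IsAdicComplete (maximalIdeal Λ) Λ]
    (D : Type*) [AddCommGroup D] [Module Λ D]
    (hD : Nonempty (D ≃ₗ[Λ] (ℕ → Λ)))
    (I : Type*) (e : I → D)
    (hsurj₁ : Function.Surjective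
      ((Submodule.mkQ ((maximalIdeal Λ) • (⊤ : Submodule Λ D))).comp
        (Finsupp.linearCombination Λ e)))
    (hker₁ : ∀ f : I →₀ Λ,
      (Submodule.mkQ ((maximalIdeal Λ) • (⊤ : Submodule Λ D)))
          (Finsupp.linearCombination Λ e f) = 0 ↔ ∀ i, f i ∈ maximalIdeal Λ) :
    ∀ n : ℕ,
      Function.Surjective
        ((Submodule.mkQ (((maximalIdeal Λ) ^ n) • (⊤ : Submodule Λ D))).comp
          (Finsupp.linearCombination Λ e)) ∧
      ∀ f : I →₀ Λ,
        (Submodule.mkQ (((maximalIdeal Λ) ^ n) • (⊤ : Submodule Λ D)))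
            (Finsupp.linearCombination Λ e f) = 0 ↔ ∀ i, f i ∈ (maximalIdeal Λ) ^ n :=
  stmt6_general Λ D hD I e hsurj₁ hker₁
end

section
/- With $\Lambda$, $\mathfrak{m}$, $D \cong \prod_{i \in \mathbb{N}} \Lambda$ and $(e_i)_{i \in I}$ as above (images forming a basis of $D/\mathfrak{m}D$), every element $x \in D$ admits a unique expression $x = \sum_{i \in I} a_i e_i$ with $a_i \in \Lambda$ such that for every $h \in \mathbb{N}$ the set $\{i \in I : a_i \notin \mathfrak{m}^h\}$ is finite (i.e., $a_i \to 0$ in the $\mathfrak{m}$-adic topology along the filter of cofinite subsets of $I$). -/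
/-!
Write `𝔪` for the maximal ideal of `Λ` and `k` for its residue field. In the coordinates of
`D ≅ Λ^ℕ`, the reductions of the `eᵢ` are linearly independent over `k` (as `𝔪` is finitely
generated, `𝔪 • Λ^ℕ = 𝔪^ℕ`). For finitely many of them, finitely many coordinate functionals
therefore give a square matrix over `Λ` that is the identity modulo `𝔪`, hence invertible. So
`∑ fᵢ eᵢ ∈ 𝔪ⁿD` forces every `fᵢ ∈ 𝔪ⁿ`, and uniqueness follows because `Λ` is separated.
For existence, the `eᵢ` span `D` modulo `𝔪ⁿD` for every `n`, so `x` has finite approximations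
`gₙ` with `x - ∑ gₙᵢ eᵢ ∈ 𝔪ⁿD`. By the coefficient bound each `gₙᵢ` is `𝔪`-adically Cauchy in
`n`, and the limits `aᵢ` are the coefficients.
-/

open IsLocalRing

theorem Ideal.smul_top_self {R : Type*} [CommRing R] (J : Ideal R) :
    J • (⊤ : Submodule R R) = J := by
  rw [smul_eq_mul, Ideal.mul_top]

theorem LinearMap.apply_mem_of_mem_smul_top {R M : Type*} [CommRing R] [AddCommGroup M]
    [Module R M] (φ : M →ₗ[R] R) {J : Ideal R} {d : M} (hd : d ∈ J • (⊤ : Submodule R M)) :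
    φ d ∈ J :=
  J.smul_top_self ▸ Submodule.smul_top_le_comap_smul_top J φ hd

theorem Ideal.mem_smul_top_pi_of_forall_mem {R κ : Type*} [CommRing R] {J : Ideal R}
    (hJ : J.FG) {d : κ → R} (hd : ∀ c, d c ∈ J) : d ∈ J • (⊤ : Submodule R (κ → R)) := by
  obtain ⟨T, rfl⟩ := hJ
  choose f _ hf using fun c => Submodule.mem_span_finset.1 (hd c)
  have hsum : d = ∑ m ∈ T, m • fun c => f c m := by
    funext c
    simp only [← hf c, Finset.sum_apply, Pi.smul_apply, smul_eq_mul, mul_comm]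
  rw [hsum]
  exact Submodule.sum_mem _ fun m hm => Submodule.smul_mem_smul (Submodule.subset_span hm) trivial

theorem LinearIndependent.exists_finsupp_dual {K ι κ : Type*} [Field K] [Fintype ι]
    [DecidableEq ι] {v : ι → κ → K} (hv : LinearIndependent K v) :
    ∃ b : ι → κ →₀ K, ∀ i j, ((b i).sum fun c β => β * v j c) = (1 : Matrix ι ι K) i j := by
  let L : κ → (ι → K) →ₗ[K] K := fun c => LinearMap.proj c ∘ₗ Fintype.linearCombination K v
  have hker : ⨅ c, LinearMap.ker (L c) = ⊥ := by
    rw [← LinearMap.ker_pi, eq_bot_iff]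
    intro g hg
    have : Fintype.linearCombination K v g = 0 := funext fun c => congr_fun hg c
    rw [Fintype.linearCombination_apply] at this
    exact funext (Fintype.linearIndependent_iff.1 hv g this)
  have hspan (i : ι) : LinearMap.proj i ∈ Submodule.span K (Set.range L) :=
    FiniteDimensional.mem_span_of_iInf_ker_le_ker (hker ▸ bot_le)
  choose b hb using fun i => Finsupp.mem_span_range_iff_exists_finsupp.1 (hspan i)
  refine ⟨b, fun i j => ?_⟩
  have := LinearMap.congr_fun (hb i) (Pi.single j 1)
  simpa [L, Finsupp.sum, LinearMap.sum_apply, Fintype.linearCombination_apply_single,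
    Pi.single_apply, Matrix.one_apply, Finset.sum_ite_eq, eq_comm] using this

open Matrix in
theorem Matrix.isUnit_det_of_isUnit_det_map_residue {R n : Type*} [CommRing R] [IsLocalRing R]
    [Fintype n] [DecidableEq n] {M : Matrix n n R} (hM : IsUnit (M.map (residue R)).det) :
    IsUnit M.det :=
  (isUnit_map_iff (residue R) _).1 (by rwa [RingHom.map_det])

open Matrix in
theorem Matrix.mem_of_mulVec_mem {R n : Type*} [CommRing R] [Fintype n] [DecidableEq n]
    {M : Matrix n n R} (hM : IsUnit M.det) {J : Ideal R} {c : n → R} (hc : ∀ i, (M *ᵥ c) i ∈ J)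
    (i : n) : c i ∈ J := by
  rw [← one_mulVec c, ← nonsing_inv_mul M hM, ← mulVec_mulVec]
  exact Submodule.sum_mem _ fun k _ => J.mul_mem_left _ (hc k)

section CoefficientBound

variable {Λ D I κ : Type*} [CommRing Λ] [IsLocalRing Λ] [AddCommGroup D] [Module Λ D]

theorem linearIndependent_residue_coord [IsNoetherianRing Λ] (ι : D ≃ₗ[Λ] (κ → Λ)) {e : I → D}
    (he : ∀ f : I →₀ Λ, Finsupp.linearCombination Λ e f ∈ maximalIdeal Λ • (⊤ : Submodule Λ D) →
      ∀ i, f i ∈ maximalIdeal Λ) :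
    LinearIndependent (ResidueField Λ) fun i c => residue Λ (ι (e i) c) := by
  rw [linearIndependent_iff]
  intro l hl
  obtain ⟨f, rfl⟩ := Finsupp.mapRange_surjective _ (map_zero _) residue_surjective l
  have hcoord (c : κ) : ι (Finsupp.linearCombination Λ e f) c ∈ maximalIdeal Λ := by
    have := congr_fun hl c
    rw [Finsupp.linearCombination_apply, Finsupp.sum_mapRange_index (by simp)] at this
    rw [← residue_eq_zero_iff]
    simpa [Finsupp.linearCombination_apply, Finsupp.sum] using this
  have hmem : Finsupp.linearCombination Λ e f ∈ maximalIdeal Λ • (⊤ : Submodule Λ D) := by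
    simpa using Submodule.smul_top_le_comap_smul_top _ ι.symm.toLinearMap
      (Ideal.mem_smul_top_pi_of_forall_mem (IsNoetherian.noetherian _) hcoord)
  ext i
  simpa using he f hmem i

open Matrix in
theorem mem_of_linearCombination_mem_smul_top [IsNoetherianRing Λ] (ι : D ≃ₗ[Λ] (κ → Λ))
    {e : I → D}
    (he : ∀ f : I →₀ Λ, Finsupp.linearCombination Λ e f ∈ maximalIdeal Λ • (⊤ : Submodule Λ D) →
      ∀ i, f i ∈ maximalIdeal Λ)
    {J : Ideal Λ} {f : I →₀ Λ} (hf : Finsupp.linearCombination Λ e f ∈ J • (⊤ : Submodule Λ D))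
    (i : I) : f i ∈ J := by
  classical
  by_cases hi : i ∈ f.support
  swap
  · rw [Finsupp.notMem_support_iff.1 hi]
    exact J.zero_mem
  obtain ⟨b, hb⟩ := ((linearIndependent_residue_coord ι he).comp (Subtype.val : f.support → I)
    Subtype.val_injective).exists_finsupp_dual
  -- `Φ j` lifts the finitely supported functional dual to the reduction of `e j`,
  -- so the matrix `M = (Φ j (e k))` reduces to the identity.
  let σ := Function.surjInv (residue_surjective (R := Λ))
  let Φ (j : f.support) : D →ₗ[Λ] Λ :=
    (b j).sum fun c β => σ β • (LinearMap.proj c ∘ₗ ι.toLinearMap)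
  let M : Matrix f.support f.support Λ := Matrix.of fun j k => Φ j (e k)
  have hM : M.map (residue Λ) = 1 := by
    ext j k
    simpa [M, Φ, Finsupp.sum, σ, Function.surjInv_eq] using hb j k
  have hMf (j : f.support) : (M *ᵥ fun k => f k) j = Φ j (Finsupp.linearCombination Λ e f) := by
    rw [Finsupp.linearCombination_apply, Finsupp.sum, ← Finset.sum_coe_sort, map_sum]
    simp [M, mulVec, dotProduct, mul_comm]
  have hdet : IsUnit M.det :=
    isUnit_det_of_isUnit_det_map_residue (by rw [hM, det_one]; exact isUnit_one)
  exact mem_of_mulVec_mem hdet (fun j => hMf j ▸ (Φ j).apply_mem_of_mem_smul_top hf) ⟨i, hi⟩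

end CoefficientBound

theorem Submodule.le_sup_pow_smul_of_le_sup_smul {R M : Type*} [CommRing R] [AddCommGroup M]
    [Module R M] {𝔞 : Ideal R} {N P : Submodule R M} (h : P ≤ N ⊔ 𝔞 • P) (n : ℕ) :
    P ≤ N ⊔ 𝔞 ^ n • P := by
  induction n with
  | zero => simp
  | succ n ih =>
    calc P ≤ N ⊔ 𝔞 ^ n • P := ih
      _ ≤ N ⊔ 𝔞 ^ n • (N ⊔ 𝔞 • P) := sup_le_sup_left (Submodule.smul_mono le_rfl h) _
      _ = N ⊔ 𝔞 ^ n • N ⊔ 𝔞 ^ (n + 1) • P := by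
        rw [Submodule.smul_sup, pow_succ, Submodule.mul_smul, sup_assoc]
      _ = N ⊔ 𝔞 ^ (n + 1) • P := by
        rw [sup_eq_left.2 (Submodule.smul_le_right : 𝔞 ^ n • N ≤ N)]

section AdicExpansion

variable {R M I : Type*} [CommRing R] [AddCommGroup M] [Module R M]

theorem Finsupp.linearCombination_mem_smul_top {J : Ideal R} (e : I → M) {f : I →₀ R}
    (hf : ∀ i, f i ∈ J) : Finsupp.linearCombination R e f ∈ J • (⊤ : Submodule R M) :=
  Submodule.sum_mem _ fun i _ => Submodule.smul_mem_smul (hf i) trivial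

theorem Finset.sum_smul_eq_linearCombination_indicator (s : Finset I) (a : I → R) (e : I → M) :
    ∑ i ∈ s, a i • e i = Finsupp.linearCombination R e (Finsupp.indicator s fun i _ => a i) := by
  rw [Finsupp.linearCombination_apply,
    Finsupp.sum_of_support_subset _ (Finsupp.support_indicator_subset _ _) _ (by simp)]
  exact Finset.sum_congr rfl fun i hi => by rw [Finsupp.indicator_of_mem hi]

/-- `x = ∑ᵢ aᵢ eᵢ` with `aᵢ → 0` along the cofinite filter, the convergence being expressed through
finite partial sums so that no topology on `M` is involved. -/
def IsAdicExpansion (𝔞 : Ideal R) (e : I → M) (x : M) (a : I → R) : Prop :=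
  (∀ h : ℕ, {i | a i ∉ 𝔞 ^ h}.Finite) ∧
    ∀ n : ℕ, ∀ s : Finset I, {i | a i ∉ 𝔞 ^ n} ⊆ ↑s →
      x - ∑ i ∈ s, a i • e i ∈ (𝔞 ^ n) • (⊤ : Submodule R M)

variable {𝔞 : Ideal R} {e : I → M} {x : M}

theorem isAdicExpansion_of_approx {a : I → R} (g : ℕ → I →₀ R)
    (hx : ∀ n, x - Finsupp.linearCombination R e (g n) ∈ (𝔞 ^ n) • (⊤ : Submodule R M))
    (ha : ∀ n i, a i - g n i ∈ 𝔞 ^ n) : IsAdicExpansion 𝔞 e x a := by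
  classical
  refine ⟨fun h => (g h).support.finite_toSet.subset fun i hi => ?_, fun n s hs => ?_⟩
  · by_contra hgi
    exact hi (by simpa [Finsupp.notMem_support_iff.1 hgi] using ha h i)
  · have hsplit : x - ∑ i ∈ s, a i • e i = (x - Finsupp.linearCombination R e (g n)) +
        Finsupp.linearCombination R e (g n - Finsupp.indicator s fun i _ => a i) := by
      rw [s.sum_smul_eq_linearCombination_indicator, map_sub]
      abel
    rw [hsplit]
    refine add_mem (hx n) (Finsupp.linearCombination_mem_smul_top e fun i => ?_)
    rw [Finsupp.sub_apply, Finsupp.indicator_apply]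
    split_ifs with hi
    · simpa using neg_mem (ha n i)
    · have hai : a i ∈ 𝔞 ^ n := by_contra fun h => hi (hs h)
      simpa using sub_mem hai (ha n i)

theorem IsAdicExpansion.unique [IsHausdorff 𝔞 R]
    (hcoeff : ∀ n (f : I →₀ R), Finsupp.linearCombination R e f ∈ (𝔞 ^ n) • (⊤ : Submodule R M) →
      ∀ i, f i ∈ 𝔞 ^ n)
    {a b : I → R} (ha : IsAdicExpansion 𝔞 e x a) (hb : IsAdicExpansion 𝔞 e x b) : a = b := by
  classical
  funext i
  rw [← sub_eq_zero]
  refine IsHausdorff.haus ‹_› _ fun n => ?_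
  rw [SModEq.zero, Ideal.smul_top_self]
  let t := insert i ((ha.1 n).toFinset ∪ (hb.1 n).toFinset)
  have hdiff : Finsupp.linearCombination R e
      ((Finsupp.indicator t fun j _ => a j) - Finsupp.indicator t fun j _ => b j) ∈
        (𝔞 ^ n) • (⊤ : Submodule R M) := by
    rw [map_sub, ← t.sum_smul_eq_linearCombination_indicator,
      ← t.sum_smul_eq_linearCombination_indicator, ← sub_sub_sub_cancel_left _ _ x]
    refine sub_mem (hb.2 n t fun j hj => ?_) (ha.2 n t fun j hj => ?_) <;> simp [t, hj]
  simpa [t, Finsupp.indicator_apply] using hcoeff n _ hdiff i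

theorem exists_isAdicExpansion [IsPrecomplete 𝔞 R]
    (hcoeff : ∀ n (f : I →₀ R), Finsupp.linearCombination R e f ∈ (𝔞 ^ n) • (⊤ : Submodule R M) →
      ∀ i, f i ∈ 𝔞 ^ n)
    (hspan : ⊤ ≤ LinearMap.range (Finsupp.linearCombination R e) ⊔ 𝔞 • ⊤) (x : M) :
    ∃ a, IsAdicExpansion 𝔞 e x a := by
  have happrox (n : ℕ) : ∃ f : I →₀ R,
      x - Finsupp.linearCombination R e f ∈ (𝔞 ^ n) • (⊤ : Submodule R M) := by
    obtain ⟨_, ⟨f, rfl⟩, z, hz, hxz⟩ := Submodule.mem_sup.1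
      (Submodule.le_sup_pow_smul_of_le_sup_smul hspan n (Submodule.mem_top (x := x)))
    exact ⟨f, by rwa [← hxz, add_sub_cancel_left]⟩
  choose g hg using happrox
  have hcauchy {m n : ℕ} (hmn : m ≤ n) (i : I) : g m i - g n i ∈ 𝔞 ^ m := by
    refine hcoeff m (g m - g n) ?_ i
    rw [map_sub, ← sub_sub_sub_cancel_left _ _ x]
    exact sub_mem (Submodule.pow_smul_top_le 𝔞 M hmn (hg n)) (hg m)
  choose a ha using fun i => IsPrecomplete.prec ‹_› (f := fun n => g n i) fun hmn => by
    rw [SModEq.sub_mem, Ideal.smul_top_self]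
    exact hcauchy hmn i
  refine ⟨a, isAdicExpansion_of_approx g hg fun n i => ?_⟩
  have := (ha i n).symm
  rwa [SModEq.sub_mem, Ideal.smul_top_self] at this

end AdicExpansion

/-- With `Λ` a complete local Noetherian ring with maximal ideal `𝔪`,
`D ≅ ∏_{i ∈ ℕ} Λ`, and `(e i)` a family of elements whose images form a basis of
`D/𝔪D` over the residue field, every `x ∈ D` has a unique expression `x = ∑ᵢ aᵢ eᵢ`
with `aᵢ → 0` `𝔪`-adically along the filter of cofinite subsets of `I`
(for every `h` the set `{i | aᵢ ∉ 𝔪ʰ}` is finite); the sum converges in the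
`𝔪`-adic topology: for every `n`, and every finite set `s` containing all `i`
with `aᵢ ∉ 𝔪ⁿ`, we have `x - ∑_{i ∈ s} aᵢ eᵢ ∈ 𝔪ⁿD`. -/
theorem stmt7 (Λ : Type*) [CommRing Λ] [IsLocalRing Λ] [IsNoetherianRing Λ]
    [IsAdicComplete (maximalIdeal Λ) Λ]
    (D : Type*) [AddCommGroup D] [Module Λ D]
    (hD : Nonempty (D ≃ₗ[Λ] (ℕ → Λ)))
    (I : Type*) (e : I → D)
    (hsurj₁ : Function.Surjective
      ((Submodule.mkQ ((maximalIdeal Λ) • (⊤ : Submodule Λ D))).comp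
        (Finsupp.linearCombination Λ e)))
    (hker₁ : ∀ f : I →₀ Λ,
      (Submodule.mkQ ((maximalIdeal Λ) • (⊤ : Submodule Λ D)))
          (Finsupp.linearCombination Λ e f) = 0 ↔ ∀ i, f i ∈ maximalIdeal Λ)
    (x : D) :
    ∃! a : I → Λ,
      (∀ h : ℕ, {i : I | a i ∉ (maximalIdeal Λ) ^ h}.Finite) ∧
      ∀ n : ℕ, ∀ s : Finset I, {i : I | a i ∉ (maximalIdeal Λ) ^ n} ⊆ ↑s →
        x - ∑ i ∈ s, a i • e i ∈ ((maximalIdeal Λ) ^ n) • (⊤ : Submodule Λ D) := by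
  obtain ⟨ι⟩ := hD
  have hcoeff (n : ℕ) (f : I →₀ Λ)
      (hf : Finsupp.linearCombination Λ e f ∈ (maximalIdeal Λ ^ n) • (⊤ : Submodule Λ D)) :
      ∀ i, f i ∈ maximalIdeal Λ ^ n :=
    mem_of_linearCombination_mem_smul_top ι (fun f hf => (hker₁ f).1 (by simpa using hf)) hf
  have hspan : ⊤ ≤ LinearMap.range (Finsupp.linearCombination Λ e) ⊔ maximalIdeal Λ • ⊤ := by
    intro d _
    obtain ⟨f, hf⟩ := hsurj₁ (Submodule.mkQ _ d)
    refine Submodule.mem_sup.2 ⟨_, ⟨f, rfl⟩, d - Finsupp.linearCombination Λ e f, ?_, by abel⟩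
    exact (Submodule.Quotient.eq _).1 hf.symm
  obtain ⟨a, ha⟩ := exists_isAdicExpansion hcoeff hspan x
  exact ⟨a, ha, fun b hb => IsAdicExpansion.unique hcoeff hb ha⟩
end
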